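/- arXiv:2305.02684 — 5 statements merged into one kernel-verified Lean document; each statement's English description precedes it below -/
import Mathlib

section
/- For all integers n ≥ 1, S_s(n,2) = ((n-1)!)^s · H_{n-1}^{(s)}, where H_m^{(s)} = ∑_{ℓ=1}^{m} 1/ℓ^s is the generalized harmonic number (with H_0^{(s)} = 0). -/
/-- Stirling numbers of the first kind with level `s`. -/
def Slev (s : ℕ) : ℕ → ℕ → ℕ
  | 0, 0 => 1
  | 0, _ + 1 => 0
  | _ + 1, 0 => 0
  | n + 1, k + 1 => Slev s n k + n ^ s * Slev s n (k + 1)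

/-- Generalized harmonic number of order `s`: `H_m^{(s)} = ∑_{ℓ=1}^m 1/ℓ^s`. -/
def genHarmonic (s m : ℕ) : ℚ := ∑ ℓ ∈ Finset.range m, 1 / ((ℓ : ℚ) + 1) ^ s

lemma Slev_one (s n : ℕ) : Slev s (n + 1) 1 = (Nat.factorial n) ^ s := by
  induction n with
  | zero => simp [Slev]
  | succ n ih =>
    have h : Slev s (n + 1 + 1) 1 = Slev s (n + 1) 0 + (n + 1) ^ s * Slev s (n + 1) 1 := rfl
    rw [h, ih]
    simp [Slev, Nat.factorial_succ, mul_pow]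

lemma stmt_aux (s : ℕ) (n : ℕ) :
    (Slev s (n + 1) 2 : ℚ) = ((Nat.factorial n : ℚ)) ^ s * genHarmonic s n := by
  induction n with
  | zero => simp [Slev, genHarmonic]
  | succ m ih =>
    have h1 : Slev s (m + 1 + 1) 2 = Slev s (m + 1) 1 + (m + 1) ^ s * Slev s (m + 1) 2 := rfl
    have h2 : genHarmonic s (m + 1) = genHarmonic s m + 1 / ((m : ℚ) + 1) ^ s := by
      simp [genHarmonic, Finset.sum_range_succ]
    have hne : ((m : ℚ) + 1) ^ s ≠ 0 := by positivity
    rw [h1, h2]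
    push_cast [Slev_one, ih]
    have hf : ((m + 1).factorial : ℚ) = ((m : ℚ) + 1) * (Nat.factorial m : ℚ) := by
      push_cast [Nat.factorial_succ]; ring
    rw [hf, mul_pow]
    field_simp
    ring

theorem stmt_2 (s : ℕ) (hs : 0 < s) (n : ℕ) (hn : 1 ≤ n) :
    (Slev s n 2 : ℚ) = ((Nat.factorial (n - 1) : ℚ)) ^ s * genHarmonic s (n - 1) := by
  obtain ⟨m, rfl⟩ := Nat.exists_eq_succ_of_ne_zero (by omega : n ≠ 0)
  simpa using stmt_aux s m
end

section
/- For all integers n ≥ 1, S_s(n,3) = ((n-1)!)^s · ∑_{k=1}^{n-2} H_k^{(s)}/(k+1)^s, where H_k^{(s)} is the generalized harmonic number of order s. -/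
lemma slev_zero (s n : ℕ) (hn : 1 ≤ n) : Slev s n 0 = 0 := by
  cases n with
  | zero => omega
  | succ m => rfl

lemma fac_pow (s t : ℕ) :
    ((Nat.factorial (t + 1) : ℚ)) ^ s = ((t : ℚ) + 1) ^ s * ((Nat.factorial t : ℚ)) ^ s := by
  rw [Nat.factorial_succ, ← mul_pow]
  push_cast
  ring

lemma slev1 (s : ℕ) : ∀ n, 1 ≤ n → (Slev s n 1 : ℚ) = ((Nat.factorial (n - 1) : ℚ)) ^ s := by
  intro n
  induction n with
  | zero => omega
  | succ m ih =>
    intro _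
    cases m with
    | zero => simp [Slev]
    | succ t =>
      have heq : Slev s (t + 2) 1 = Slev s (t + 1) 0 + (t + 1) ^ s * Slev s (t + 1) 1 := rfl
      have ih' := ih (by omega)
      simp only [Nat.add_sub_cancel] at ih' ⊢
      rw [heq, slev_zero s (t + 1) (by omega)]
      push_cast
      rw [ih', fac_pow, zero_add]

lemma slev2 (s : ℕ) : ∀ n, 1 ≤ n →
    (Slev s n 2 : ℚ) = ((Nat.factorial (n - 1) : ℚ)) ^ s * genHarmonic s (n - 1) := by
  intro n
  induction n with
  | zero => omega
  | succ m ih =>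
    intro _
    cases m with
    | zero => simp [Slev, genHarmonic]
    | succ t =>
      have heq : Slev s (t + 2) 2 = Slev s (t + 1) 1 + (t + 1) ^ s * Slev s (t + 1) 2 := rfl
      have hH : genHarmonic s (t + 1) = genHarmonic s t + 1 / ((t : ℚ) + 1) ^ s := by
        simp [genHarmonic, Finset.sum_range_succ]
      have hne : ((t : ℚ) + 1) ^ s ≠ 0 := by positivity
      have ih' := ih (by omega)
      have h1 := slev1 s (t + 1) (by omega)
      simp only [Nat.add_sub_cancel] at ih' h1 ⊢
      rw [heq]
      push_cast
      rw [ih', h1, fac_pow, hH]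
      field_simp
      ring

theorem stmt_3 (s : ℕ) (hs : 0 < s) (n : ℕ) (hn : 1 ≤ n) :
    (Slev s n 3 : ℚ) = ((Nat.factorial (n - 1) : ℚ)) ^ s *
      ∑ k ∈ Finset.range (n - 2), genHarmonic s (k + 1) / ((k : ℚ) + 2) ^ s := by
  induction n with
  | zero => omega
  | succ m ih =>
    cases m with
    | zero => simp [Slev]
    | succ t =>
      cases t with
      | zero => simp [Slev]
      | succ u =>
        have heq : Slev s (u + 3) 3 = Slev s (u + 2) 2 + (u + 2) ^ s * Slev s (u + 2) 3 := rfl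
        have h1 : u + 3 - 1 = u + 2 := rfl
        have h2 : u + 3 - 2 = u + 1 := rfl
        have h3 : u + 2 - 1 = u + 1 := rfl
        have h4 : u + 2 - 2 = u := rfl
        have hne : ((u : ℚ) + 2) ^ s ≠ 0 := by positivity
        have ih' := ih (by omega)
        have h2' := slev2 s (u + 2) (by omega)
        rw [show u + 1 + 1 = u + 2 from rfl] at ih'
        rw [h3, h4] at ih'
        rw [h3] at h2'
        rw [show u + 1 + 1 + 1 = u + 3 from rfl, h1, h2, heq, Finset.sum_range_succ]
        push_cast
        have hf2 : ((Nat.factorial (u + 2) : ℚ)) ^ s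
            = ((u : ℚ) + 2) ^ s * (((u : ℚ) + 1) ^ s * ((Nat.factorial u : ℚ)) ^ s) := by
          rw [fac_pow s (u + 1), fac_pow s u]
          push_cast
          ring
        rw [ih', h2', fac_pow, hf2]
        field_simp
        ring
end

section
/- For all integers n ≥ 0, ∑_{k=0}^{n} k · S_s(n,k) = (∏_{i=1}^{n} (1 + (i-1)^s)) · ∑_{i=1}^{n} 1/(1 + (i-1)^s). -/
lemma Slev_eq_zero (s : ℕ) : ∀ n k, n < k → Slev s n k = 0 := by
  intro n
  induction n with
  | zero =>
    intro k h
    cases k with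
    | zero => omega
    | succ m => rfl
  | succ n ih =>
    intro k h
    cases k with
    | zero => omega
    | succ m =>
      show Slev s n m + n ^ s * Slev s n (m + 1) = 0
      rw [ih m (by omega), ih (m + 1) (by omega)]
      simp

lemma Slev_pow_zero (s : ℕ) (hs : 0 < s) (n : ℕ) :
    ((n : ℚ)) ^ s * (Slev s n 0 : ℚ) = 0 := by
  cases n with
  | zero => simp [zero_pow hs.ne']
  | succ m => show _ * ((0 : ℕ) : ℚ) = 0; simp

lemma Slev_rowsum (s : ℕ) (hs : 0 < s) (n : ℕ) :
    ∑ k ∈ Finset.range (n + 1), (Slev s n k : ℚ) =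
      ∏ i ∈ Finset.range n, (1 + (i : ℚ) ^ s) := by
  induction n with
  | zero => simp [Slev]
  | succ n ih =>
    have hshift : ∑ k ∈ Finset.range (n + 1), (Slev s n (k + 1) : ℚ) =
        (∑ k ∈ Finset.range (n + 1), (Slev s n k : ℚ)) - (Slev s n 0 : ℚ) := by
      have h1 := Finset.sum_range_succ' (fun k => (Slev s n k : ℚ)) (n + 1)
      have h2 := Finset.sum_range_succ (fun k => (Slev s n k : ℚ)) (n + 1)
      rw [Slev_eq_zero s n (n + 1) (by omega)] at h2
      push_cast at h2
      linarith [h1, h2]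
    rw [Finset.sum_range_succ' (fun k => (Slev s (n + 1) k : ℚ)) (n + 1)]
    simp only [Slev]
    push_cast
    rw [Finset.sum_add_distrib, ← Finset.mul_sum, hshift, ih, Finset.prod_range_succ]
    have h0 := Slev_pow_zero s hs n
    ring_nf
    linarith [h0]

theorem stmt_5 (s : ℕ) (hs : 0 < s) (n : ℕ) :
    ∑ k ∈ Finset.range (n + 1), (k : ℚ) * (Slev s n k : ℚ) =
      (∏ i ∈ Finset.range n, (1 + (i : ℚ) ^ s)) *
        ∑ i ∈ Finset.range n, 1 / (1 + (i : ℚ) ^ s) := by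
  induction n with
  | zero => simp
  | succ n ih =>
    have hpos : (0 : ℚ) < 1 + (n : ℚ) ^ s := by positivity
    have hshift : ∑ k ∈ Finset.range (n + 1), ((k : ℚ) + 1) * (Slev s n (k + 1) : ℚ) =
        ∑ k ∈ Finset.range (n + 1), (k : ℚ) * (Slev s n k : ℚ) := by
      have h1 := Finset.sum_range_succ' (fun k => (k : ℚ) * (Slev s n k : ℚ)) (n + 1)
      have h2 := Finset.sum_range_succ (fun k => (k : ℚ) * (Slev s n k : ℚ)) (n + 1)
      rw [Slev_eq_zero s n (n + 1) (by omega)] at h2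
      push_cast at h1 h2
      simp at h1 h2
      linarith [h1, h2]
    rw [Finset.sum_range_succ' (fun k => (k : ℚ) * (Slev s (n + 1) k : ℚ)) (n + 1)]
    simp only [Slev]
    push_cast
    have expand : ∑ k ∈ Finset.range (n + 1),
        ((k : ℚ) + 1) * ((Slev s n k : ℚ) + (n : ℚ) ^ s * (Slev s n (k + 1) : ℚ)) =
        (∑ k ∈ Finset.range (n + 1), (k : ℚ) * (Slev s n k : ℚ)) +
        (∑ k ∈ Finset.range (n + 1), (Slev s n k : ℚ)) +
        (n : ℚ) ^ s * ∑ k ∈ Finset.range (n + 1), ((k : ℚ) + 1) * (Slev s n (k + 1) : ℚ) := by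
      rw [Finset.mul_sum, ← Finset.sum_add_distrib, ← Finset.sum_add_distrib]
      exact Finset.sum_congr rfl fun k _ => by ring
    rw [expand, hshift, ih, Slev_rowsum s hs n, Finset.prod_range_succ,
      Finset.sum_range_succ]
    field_simp
    ring
end

section
/- Define α_1 = 1 and α_i = ∏_{j=2}^{i} (1 + (j-2)^s)/(j-1)^s for i ≥ 2. Then for every integer i ≥ 1, α_i / (α_1 + α_2 + ⋯ + α_i) = 1/(1 + (i-1)^s); that is, in the F^α-scheme with these coefficients, the record indicator probabilities p_i equal 1/(1 + (i-1)^s). -/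
theorem stmt_7 (s : ℕ) (hs : 0 < s) (α : ℕ → ℚ)
    (hα : ∀ i, 1 ≤ i →
      α i = ∏ j ∈ Finset.Icc 2 i, (1 + ((j : ℚ) - 2) ^ s) / ((j : ℚ) - 1) ^ s)
    (i : ℕ) (hi : 1 ≤ i) :
    α i / ∑ i' ∈ Finset.Icc 1 i, α i' = 1 / (1 + ((i : ℚ) - 1) ^ s) := by
  have hpos : ∀ k, 1 ≤ k → 0 < α k := by
    intro k hk
    rw [hα k hk]
    apply Finset.prod_pos
    intro j hj
    simp only [Finset.mem_Icc] at hj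
    have h2 : (2:ℚ) ≤ (j:ℚ) := by exact_mod_cast hj.1
    apply div_pos
    · have : (0:ℚ) ≤ ((j:ℚ) - 2) ^ s := pow_nonneg (by linarith) s
      linarith
    · exact pow_pos (by linarith) s
  have hsum : ∀ k, 1 ≤ k →
      ∑ i' ∈ Finset.Icc 1 k, α i' = α k * (1 + ((k : ℚ) - 1) ^ s) := by
    intro k hk
    induction k, hk using Nat.le_induction with
    | base =>
      simp [hα 1 le_rfl, zero_pow hs.ne']
    | succ k hk ih =>
      rw [Finset.sum_Icc_succ_top (by omega : 1 ≤ k + 1), ih]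
      have hstep : α (k + 1) = α k * ((1 + (((k+1) : ℚ) - 2) ^ s) / (((k+1) : ℚ) - 1) ^ s) := by
        rw [hα (k+1) (by omega), Finset.prod_Icc_succ_top (by omega : 2 ≤ k + 1), ← hα k hk]
        push_cast
        ring
      rw [hstep]
      have hk0 : (0:ℚ) < (k:ℚ) := by exact_mod_cast hk
      have hkpow : ((k:ℚ)) ^ s ≠ 0 := (pow_pos hk0 s).ne'
      push_cast
      field_simp
      ring
  rw [hsum i hi]
  have hαi := (hpos i hi).ne'
  have h1 : (0:ℚ) < 1 + ((i:ℚ) - 1) ^ s := by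
    have : (0:ℚ) ≤ ((i:ℚ) - 1) ^ s := pow_nonneg (by
      have : (1:ℚ) ≤ (i:ℚ) := by exact_mod_cast hi
      linarith) s
    linarith

  rw [div_mul_eq_div_div, div_self hαi]
end

section
/- Let I_1, …, I_n be independent Bernoulli random variables with P(I_i = 1) = 1/(1 + (i-1)^s), and let N_n = I_1 + ⋯ + I_n. Then for 1 ≤ k ≤ n, P(N_n = k) = S_s(n,k) / ∏_{i=1}^{n} (1 + (i-1)^s). -/
open MeasureTheory ProbabilityTheory

/-! Conditioning on the last indicator `I n`, the probabilities `P(N_{n+1} = k)` obey the same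
recursion as `S_s(n+1, k)` once they are multiplied by the normalising product
`∏_{i ≤ n} (1 + i^s)`: the factor `1 + n^s` turns `P(I n = 0)` into `n^s` and `P(I n = 1)`
into `1`. -/

lemma Slev_succ_zero {s : ℕ} (hs : 0 < s) (n : ℕ) :
    Slev s (n + 1) 0 = n ^ s * Slev s n 0 := by
  cases n <;> simp [Slev, hs.ne']

lemma Slev_succ_succ (s n k : ℕ) :
    Slev s (n + 1) (k + 1) = Slev s n k + n ^ s * Slev s n (k + 1) :=
  rfl

namespace ProbabilityTheory

lemma iIndepFun.indepFun_sum_castSucc_last {Ω β : Type*} [MeasurableSpace Ω] {μ : Measure Ω}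
    [AddCommMonoid β] [MeasurableSpace β] [MeasurableAdd₂ β] {n : ℕ}
    {f : Fin (n + 1) → Ω → β}
    (hf : iIndepFun f μ) (hmeas : ∀ i, Measurable (f i)) :
    IndepFun (fun ω ↦ ∑ i : Fin n, f i.castSucc ω) (f (Fin.last n)) μ := by
  have h := hf.indepFun_finsetSum_of_notMem hmeas (s := Finset.univ.map Fin.castSuccEmb)
    (i := Fin.last n) (by simp)
  convert h using 1
  ext ω
  simp [Finset.sum_map]

section SumWithIndicator

variable {Ω : Type*} [MeasurableSpace Ω] {μ : Measure Ω} {F X : Ω → ℕ}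

lemma IndepFun.measure_add_eq_zero (hFX : IndepFun F X μ) :
    μ {ω | F ω + X ω = 0} = μ {ω | F ω = 0} * μ {ω | X ω = 0} := by
  have hset : {ω | F ω + X ω = 0} = F ⁻¹' {0} ∩ X ⁻¹' {0} := by
    ext ω
    simp
  rw [hset, hFX.measure_inter_preimage_eq_mul _ _ (measurableSet_singleton _)
    (measurableSet_singleton _)]
  rfl

lemma IndepFun.measure_add_eq_succ (hF : Measurable F) (hX : Measurable X)
    (hFX : IndepFun F X μ) (hX01 : ∀ ω, X ω = 0 ∨ X ω = 1) (k : ℕ) :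
    μ {ω | F ω + X ω = k + 1} =
      μ {ω | F ω = k + 1} * μ {ω | X ω = 0} + μ {ω | F ω = k} * μ {ω | X ω = 1} := by
  have hset : {ω | F ω + X ω = k + 1} =
      (F ⁻¹' {k + 1} ∩ X ⁻¹' {0}) ∪ (F ⁻¹' {k} ∩ X ⁻¹' {1}) := by
    ext ω
    have := hX01 ω
    simp only [Set.mem_ofPred_eq, Set.mem_union, Set.mem_inter_iff, Set.mem_preimage,
      Set.mem_singleton_iff]
    omega
  have hdisj : Disjoint (F ⁻¹' {k + 1} ∩ X ⁻¹' {0}) (F ⁻¹' {k} ∩ X ⁻¹' {1}) :=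
    Set.disjoint_left.mpr fun ω h₀ h₁ ↦ by simp_all
  rw [hset, measure_union hdisj ((hF (measurableSet_singleton _)).inter
    (hX (measurableSet_singleton _))),
    hFX.measure_inter_preimage_eq_mul _ _ (measurableSet_singleton _) (measurableSet_singleton _),
    hFX.measure_inter_preimage_eq_mul _ _ (measurableSet_singleton _) (measurableSet_singleton _)]
  rfl

lemma measure_eq_zero_mul_one_add [IsProbabilityMeasure μ] (hX : Measurable X)
    (hX01 : ∀ ω, X ω = 0 ∨ X ω = 1) {x : ENNReal} (hx : x ≠ ⊤)
    (hp : μ {ω | X ω = 1} = 1 / (1 + x)) :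
    μ {ω | X ω = 0} * (1 + x) = x := by
  have hcompl : {ω | X ω = 0} = {ω | X ω = 1}ᶜ := by
    ext ω
    rcases hX01 ω with h | h <;> simp [h]
  have hx1 : 1 + x ≠ ⊤ := ENNReal.add_ne_top.mpr ⟨ENNReal.one_ne_top, hx⟩
  rw [hcompl, prob_compl_eq_one_sub (s := {ω | X ω = 1}) (hX (measurableSet_singleton 1)), hp,
    ENNReal.sub_mul fun _ _ ↦ hx1, one_mul,
    ENNReal.div_mul_cancel (by simp) hx1, ENNReal.add_sub_cancel_left ENNReal.one_ne_top]

end SumWithIndicator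

end ProbabilityTheory

lemma measure_sum_mul_prod_eq_Slev {s : ℕ} (hs : 0 < s) {Ω : Type*} [MeasurableSpace Ω]
    {μ : Measure Ω} [IsProbabilityMeasure μ] {n : ℕ} (I : Fin n → Ω → ℕ)
    (hmeas : ∀ i, Measurable (I i)) (hval : ∀ i ω, I i ω = 0 ∨ I i ω = 1)
    (hindep : iIndepFun I μ)
    (hp : ∀ i : Fin n, μ {ω | I i ω = 1} = 1 / (1 + ((i : ℕ) : ENNReal) ^ s)) (k : ℕ) :
    μ {ω | ∑ i, I i ω = k} * ∏ i ∈ Finset.range n, (1 + (i : ENNReal) ^ s) =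
      Slev s n k := by
  induction n generalizing k with
  | zero => cases k <;> simp [Slev]
  | succ n ih =>
    set F : Ω → ℕ := fun ω ↦ ∑ i : Fin n, I i.castSucc ω
    set X := I (Fin.last n)
    have hF : Measurable F := Finset.measurable_sum _ fun i _ ↦ hmeas _
    have hFX : IndepFun F X μ := hindep.indepFun_sum_castSucc_last hmeas
    have IH := ih (fun i ↦ I i.castSucc) (fun i ↦ hmeas _) (fun i ↦ hval _)
      (hindep.precomp (Fin.castSucc_injective n)) (fun i ↦ hp i.castSucc)
    set D := ∏ i ∈ Finset.range n, (1 + (i : ENNReal) ^ s)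
    have hx : (n : ENNReal) ^ s ≠ ⊤ := ENNReal.pow_ne_top (ENNReal.natCast_ne_top n)
    have hX1 : μ {ω | X ω = 1} = 1 / (1 + (n : ENNReal) ^ s) := by simpa using hp (Fin.last n)
    have hX0 := measure_eq_zero_mul_one_add (hmeas _) (hval _) hx hX1
    have hX1' : μ {ω | X ω = 1} * (1 + (n : ENNReal) ^ s) = 1 := by
      rw [hX1, ENNReal.div_mul_cancel (by simp) (ENNReal.add_ne_top.mpr ⟨by simp, hx⟩)]
    simp_rw [Fin.sum_univ_castSucc, Finset.prod_range_succ]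
    cases k with
    | zero =>
      rw [hFX.measure_add_eq_zero, Slev_succ_zero hs]
      calc _ = (μ {ω | F ω = 0} * D) * (μ {ω | X ω = 0} * (1 + (n : ENNReal) ^ s)) := by ring
        _ = _ := by rw [IH, hX0]; push_cast; ring
    | succ k =>
      rw [hFX.measure_add_eq_succ hF (hmeas _) (hval _), Slev_succ_succ]
      calc _ = (μ {ω | F ω = k + 1} * D) * (μ {ω | X ω = 0} * (1 + (n : ENNReal) ^ s)) +
            (μ {ω | F ω = k} * D) * (μ {ω | X ω = 1} * (1 + (n : ENNReal) ^ s)) := by ring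
        _ = _ := by rw [IH, IH, hX0, hX1']; push_cast; ring

theorem stmt_8_general (s : ℕ) (hs : 0 < s) (n : ℕ)
    {Ω : Type*} [MeasurableSpace Ω] (μ : Measure Ω) [IsProbabilityMeasure μ]
    (I : Fin n → Ω → ℕ)
    (hmeas : ∀ i, Measurable (I i))
    (hval : ∀ i ω, I i ω = 0 ∨ I i ω = 1)
    (hindep : iIndepFun I μ)
    (hp : ∀ i : Fin n, μ {ω | I i ω = 1} = 1 / (1 + ((i : ℕ) : ENNReal) ^ s))
    (k : ℕ) :
    μ {ω | ∑ i, I i ω = k} =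
      (Slev s n k : ENNReal) / ∏ i ∈ Finset.range n, (1 + (i : ENNReal) ^ s) := by
  have hprod_ne_zero : ∏ i ∈ Finset.range n, (1 + (i : ENNReal) ^ s) ≠ 0 :=
    Finset.prod_ne_zero_iff.mpr fun i _ ↦ by simp
  have hprod_ne_top : ∏ i ∈ Finset.range n, (1 + (i : ENNReal) ^ s) ≠ ⊤ :=
    ENNReal.prod_ne_top fun i _ ↦ ENNReal.add_ne_top.mpr
      ⟨ENNReal.one_ne_top, ENNReal.pow_ne_top (ENNReal.natCast_ne_top i)⟩
  rw [ENNReal.eq_div_iff hprod_ne_zero hprod_ne_top, mul_comm]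
  exact measure_sum_mul_prod_eq_Slev hs I hmeas hval hindep hp k

theorem stmt_8 (s : ℕ) (hs : 0 < s) (n : ℕ)
    {Ω : Type*} [MeasurableSpace Ω] (μ : Measure Ω) [IsProbabilityMeasure μ]
    (I : Fin n → Ω → ℕ)
    (hmeas : ∀ i, Measurable (I i))
    (hval : ∀ i ω, I i ω = 0 ∨ I i ω = 1)
    (hindep : iIndepFun I μ)
    (hp : ∀ i : Fin n, μ {ω | I i ω = 1} = 1 / (1 + ((i : ℕ) : ENNReal) ^ s))
    (k : ℕ) (hk1 : 1 ≤ k) (hkn : k ≤ n) :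
    μ {ω | ∑ i, I i ω = k} =
      (Slev s n k : ENNReal) / ∏ i ∈ Finset.range n, (1 + (i : ENNReal) ^ s) :=
  stmt_8_general s hs n μ I hmeas hval hindep hp k
end
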